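/- arXiv:1906.03200 — 3 statements merged into one kernel-verified Lean document; each statement's English description precedes it below -/
import Mathlib

section
/- Let A be a symmetric positive definite n×n real matrix with eigendecomposition A = U Δ Uᵀ, U orthogonal and Δ = diag(δ₁,…,δₙ) with δᵢ > 0. Define F by F_{kl} = 1/(√δₖ √δₗ (√δₖ + √δₗ)). Then for any symmetric matrix H (viewed as the differential dA), the matrix D := -U (F ∘ (Uᵀ H U)) Uᵀ satisfies D A^{-1/2} + A^{-1/2} D = -A^{-1} H A^{-1}, i.e., D is the differential of A ↦ A^{-1/2} in direction H. -/
open Matrix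
/-- Differential of the matrix inverse square root. Let `A = U Δ Uᵀ` be symmetric positive
definite with `U` orthogonal and `Δ = diag δ`, `δᵢ > 0`. With
`F_{kl} = 1/(√δₖ √δₗ (√δₖ + √δₗ))`, for any symmetric `H` the matrix
`D = -U (F ∘ (Uᵀ H U)) Uᵀ` satisfies `D A^{-1/2} + A^{-1/2} D = -A⁻¹ H A⁻¹`. -/
theorem inv_sqrt_differential (n : ℕ) (A H U : Matrix (Fin n) (Fin n) ℝ)
    (δ : Fin n → ℝ) (hδ : ∀ i, 0 < δ i)
    (hU : U * Uᵀ = 1) (hU' : Uᵀ * U = 1)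
    (hA : A = U * Matrix.diagonal δ * Uᵀ) (hH : Hᵀ = H) :
    let F : Matrix (Fin n) (Fin n) ℝ := Matrix.of fun k l =>
      1 / (Real.sqrt (δ k) * Real.sqrt (δ l) * (Real.sqrt (δ k) + Real.sqrt (δ l)))
    let D : Matrix (Fin n) (Fin n) ℝ := -(U * Matrix.hadamard F (Uᵀ * H * U) * Uᵀ)
    let Ainvsqrt : Matrix (Fin n) (Fin n) ℝ :=
      U * Matrix.diagonal (fun i => (Real.sqrt (δ i))⁻¹) * Uᵀ
    D * Ainvsqrt + Ainvsqrt * D = -(A⁻¹ * H * A⁻¹) := by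
  intro F D Ainvsqrt
  have hAinv : A⁻¹ = U * Matrix.diagonal (fun i => (δ i)⁻¹) * Uᵀ := by
    apply Matrix.inv_eq_right_inv
    rw [hA]
    calc U * Matrix.diagonal δ * Uᵀ * (U * Matrix.diagonal (fun i => (δ i)⁻¹) * Uᵀ)
        = U * (Matrix.diagonal δ * ((Uᵀ * U) * (Matrix.diagonal (fun i => (δ i)⁻¹) * Uᵀ))) := by
          simp only [Matrix.mul_assoc]
      _ = 1 := by
          rw [hU']
          simp only [Matrix.one_mul, ← Matrix.mul_assoc, Matrix.diagonal_mul_diagonal]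
          have : (fun i => δ i * (δ i)⁻¹) = fun _ => (1:ℝ) := by
            funext i; exact mul_inv_cancel₀ (hδ i).ne'
          rw [this, Matrix.diagonal_one, Matrix.mul_one, hU]
  -- key inner identity
  have key : Matrix.hadamard F (Uᵀ * H * U) * Matrix.diagonal (fun i => (Real.sqrt (δ i))⁻¹)
      + Matrix.diagonal (fun i => (Real.sqrt (δ i))⁻¹) * Matrix.hadamard F (Uᵀ * H * U)
      = Matrix.diagonal (fun i => (δ i)⁻¹) * (Uᵀ * H * U) * Matrix.diagonal (fun i => (δ i)⁻¹) := by
    ext k l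
    simp only [Matrix.add_apply, Matrix.mul_diagonal, Matrix.diagonal_mul,
      Matrix.hadamard_apply, Matrix.of_apply, F]
    set M := (Uᵀ * H * U) k l
    have hsk : (0:ℝ) < Real.sqrt (δ k) := Real.sqrt_pos.2 (hδ k)
    have hsl : (0:ℝ) < Real.sqrt (δ l) := Real.sqrt_pos.2 (hδ l)
    have hk2 : Real.sqrt (δ k) * Real.sqrt (δ k) = δ k := Real.mul_self_sqrt (hδ k).le
    have hl2 : Real.sqrt (δ l) * Real.sqrt (δ l) = δ l := Real.mul_self_sqrt (hδ l).le
    have hsum : Real.sqrt (δ k) + Real.sqrt (δ l) ≠ 0 := by positivity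
    rw [← hk2, ← hl2]
    field_simp
    rw [Real.sqrt_sq hsk.le, Real.sqrt_sq hsl.le]
  have expand : D * Ainvsqrt + Ainvsqrt * D
      = -(U * (Matrix.hadamard F (Uᵀ * H * U) * Matrix.diagonal (fun i => (Real.sqrt (δ i))⁻¹)
          + Matrix.diagonal (fun i => (Real.sqrt (δ i))⁻¹) * Matrix.hadamard F (Uᵀ * H * U)) * Uᵀ) := by
    simp only [D, Ainvsqrt, Matrix.neg_mul, Matrix.mul_neg, Matrix.mul_add, Matrix.add_mul,
      ← neg_add]
    congr 1
    calc U * Matrix.hadamard F (Uᵀ * H * U) * Uᵀ * (U * Matrix.diagonal (fun i => (Real.sqrt (δ i))⁻¹) * Uᵀ)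
          + U * Matrix.diagonal (fun i => (Real.sqrt (δ i))⁻¹) * Uᵀ * (U * Matrix.hadamard F (Uᵀ * H * U) * Uᵀ)
        = U * (Matrix.hadamard F (Uᵀ * H * U) * ((Uᵀ * U) * (Matrix.diagonal (fun i => (Real.sqrt (δ i))⁻¹) * Uᵀ)))
          + U * (Matrix.diagonal (fun i => (Real.sqrt (δ i))⁻¹) * ((Uᵀ * U) * (Matrix.hadamard F (Uᵀ * H * U) * Uᵀ))) := by
          simp only [Matrix.mul_assoc]
      _ = _ := by
          rw [hU']
          simp only [Matrix.one_mul, Matrix.mul_add, ← Matrix.mul_assoc, Matrix.add_mul]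
  rw [expand, key, hAinv]
  congr 1
  calc U * (Matrix.diagonal (fun i => (δ i)⁻¹) * (Uᵀ * H * U) * Matrix.diagonal (fun i => (δ i)⁻¹)) * Uᵀ
      = (U * Matrix.diagonal (fun i => (δ i)⁻¹) * Uᵀ) * H * (U * Matrix.diagonal (fun i => (δ i)⁻¹) * Uᵀ) := by
        simp only [Matrix.mul_assoc]
    _ = _ := rfl
end

section
/- Prefix recursion for the weighted k-mer sum with exponential position weights: define c_j[t] := Σ_{i ∈ I_{x_{1:t}, j}} λ^{t - i₁ - j + 1} K_{Z_j}(x_i) ∈ R^q (with c_j[0] = 0 and c_0[t] the all-ones vector). Then for 1 ≤ j ≤ k and 1 ≤ t ≤ |x|: c_j[t] = λ c_j[t-1] + c_{j-1}[t-1] ⊙ b_j[t], where b_j[t] ∈ R^q has i-th entry exp(α(⟨x_t, z_j^i⟩ - 1)). -/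
open scoped RealInnerProductSpace Classical

/-- `c_j[t] = Σ_{i ∈ I_{x_{1:t}, j}} λ^{t - i₁ - j + 1} K_{Z_j}(x_i) ∈ ℝ^q`, the weighted sum
over increasing `j`-tuples of indices in the length-`t` prefix (indices written `0`-based),
with `c_0[t]` the all-ones vector. The `l`-th entry of `K_{Z_j}(x_i)` is
`Π_{s=1}^j exp(α(⟨x_{i_s}, z_l^s⟩ - 1))`. -/
noncomputable def cseq (d q : ℕ) (α lam : ℝ) (x : ℕ → EuclideanSpace ℝ (Fin d))
    (z : Fin q → ℕ → EuclideanSpace ℝ (Fin d)) : ℕ → ℕ → Fin q → ℝ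
  | 0, _ => fun _ => 1
  | j + 1, t => fun l =>
      ∑ i : Fin (j + 1) → Fin t,
        if StrictMono i then
          lam ^ (t - (i 0 : ℕ) - (j + 1)) *
            ∏ s : Fin (j + 1), Real.exp (α * (⟪x (i s : ℕ), z l (s : ℕ)⟫ - 1))
        else 0

lemma sm_le_key {n N : ℕ} {f : Fin (n+1) → Fin N} (hf : StrictMono f) (s : Fin (n+1)) :
    (f 0 : ℕ) + (s : ℕ) ≤ (f s : ℕ) := by
  obtain ⟨v, hv⟩ := s
  induction v with
  | zero => simp
  | succ n ih =>
    have h1 := ih (Nat.lt_of_succ_lt hv)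
    have h2 : f ⟨n, Nat.lt_of_succ_lt hv⟩ < f ⟨n+1, hv⟩ := hf (by simp [Fin.lt_def])
    rw [Fin.lt_def] at h2
    simp only [Fin.val_mk] at h1 h2 ⊢
    omega

lemma strictMono_snoc {n N : ℕ} {f : Fin n → Fin N} (hf : StrictMono f) :
    StrictMono (Fin.snoc (Fin.castSucc ∘ f) (Fin.last N) : Fin (n+1) → Fin (N+1)) := by
  intro a b hab
  rcases eq_or_ne b (Fin.last n) with rfl | hb
  · have ha : a ≠ Fin.last n := Fin.ne_last_of_lt hab
    rw [Fin.snoc_last, ← Fin.castSucc_castPred a ha, Fin.snoc_castSucc]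
    exact Fin.castSucc_lt_last _
  · have ha : a ≠ Fin.last n := Fin.ne_last_of_lt (lt_of_lt_of_le hab (Fin.le_last b))
    rw [← Fin.castSucc_castPred a ha, ← Fin.castSucc_castPred b hb, Fin.snoc_castSucc,
      Fin.snoc_castSucc]
    simp only [Function.comp_apply, Fin.castSucc_lt_castSucc_iff]
    exact hf (by rwa [Fin.castPred_lt_castPred_iff])

/-- Prefix recursion for the weighted `k`-mer sum with exponential position weights:
`c_j[t] = λ c_j[t-1] + c_{j-1}[t-1] ⊙ b_j[t]`, where `b_j[t]` has entries
`exp(α(⟨x_t, z_j^l⟩ - 1))`. -/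
theorem cseq_recursion (d q k : ℕ) (α lam : ℝ) (hα : 0 < α)
    (hlam0 : 0 ≤ lam) (hlam1 : lam ≤ 1)
    (x : ℕ → EuclideanSpace ℝ (Fin d)) (hx : ∀ n, ‖x n‖ = 1)
    (z : Fin q → ℕ → EuclideanSpace ℝ (Fin d)) (hz : ∀ l s, ‖z l s‖ = 1)
    (j t : ℕ) (hj : 1 ≤ j) (hjk : j ≤ k) (ht : 1 ≤ t) :
    cseq d q α lam x z j t = fun l =>
      lam * cseq d q α lam x z j (t - 1) l
        + cseq d q α lam x z (j - 1) (t - 1) l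
            * Real.exp (α * (⟪x (t - 1), z l (j - 1)⟫ - 1)) := by
  obtain ⟨m, rfl⟩ : ∃ m, j = m + 1 := ⟨j - 1, by omega⟩
  obtain ⟨u, rfl⟩ : ∃ u, t = u + 1 := ⟨t - 1, by omega⟩
  funext l
  simp only [cseq, Nat.add_sub_cancel]
  rw [← Finset.sum_filter, ← Finset.sum_filter,
    ← Finset.sum_filter_add_sum_filter_not
      (Finset.univ.filter (fun i : Fin (m+1) → Fin (u+1) => StrictMono i))
      (fun i => i (Fin.last m) = Fin.last u), add_comm]
  congr 1
  · -- B part : last entry < last, equals lam * cseq (m+1) u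
    rw [Finset.mul_sum]
    have hlt : ∀ a ∈ (Finset.univ.filter
          (fun i : Fin (m+1) → Fin (u+1) => StrictMono i)).filter
          (fun i => ¬ i (Fin.last m) = Fin.last u), ∀ s : Fin (m+1), (a s : ℕ) < u := by
      intro a ha s
      simp only [Finset.mem_filter, Finset.mem_univ, true_and] at ha
      have h1 : a s ≤ a (Fin.last m) := ha.1.monotone (Fin.le_last s)
      have h2 : (a (Fin.last m) : ℕ) < u := by
        have hle := Fin.is_le (a (Fin.last m))
        rcases Nat.lt_or_ge (a (Fin.last m) : ℕ) u with h | h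
        · exact h
        · refine absurd (Fin.ext ?_) ha.2
          simp only [Fin.val_last]
          omega
      exact lt_of_le_of_lt (Fin.le_def.mp h1) h2
    refine Finset.sum_bij' (fun a ha => fun s => (⟨(a s : ℕ), hlt a ha s⟩ : Fin u))
      (fun b hb => Fin.castSucc ∘ b) ?_ ?_ ?_ ?_ ?_
    · intro a ha
      simp only [Finset.mem_filter, Finset.mem_univ, true_and] at ha ⊢
      intro s s' hss
      exact ha.1 hss
    · intro b hb
      simp only [Finset.mem_filter, Finset.mem_univ, true_and] at hb ⊢
      exact ⟨Fin.strictMono_castSucc.comp hb, (Fin.castSucc_lt_last _).ne⟩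
    · intro a ha; funext s; exact Fin.ext (by simp)
    · intro b hb; funext s; exact Fin.ext (by simp)
    · intro a ha
      simp only [Finset.mem_filter, Finset.mem_univ, true_and] at ha
      have hkey : (a 0 : ℕ) + m ≤ (a (Fin.last m) : ℕ) := by
        simpa using sm_le_key ha.1 (Fin.last m)
      have h2 : (a (Fin.last m) : ℕ) < u := by
        have hle := Fin.is_le (a (Fin.last m))
        rcases Nat.lt_or_ge (a (Fin.last m) : ℕ) u with h | h
        · exact h
        · refine absurd (Fin.ext ?_) ha.2
          simp only [Fin.val_last]
          omega
      simp only [Fin.val_mk]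
      rw [show u + 1 - (a 0 : ℕ) - (m+1) = (u - (a 0 : ℕ) - (m+1)) + 1 by omega, pow_succ]
      ring
  · -- A part : last entry = last, equals cseq m u * exp(...)
    cases m with
    | zero =>
      have hset : (Finset.univ.filter
            (fun i : Fin 1 → Fin (u+1) => StrictMono i)).filter
            (fun i => i (Fin.last 0) = Fin.last u)
          = {fun _ => Fin.last u} := by
        ext f
        simp only [Finset.mem_filter, Finset.mem_univ, true_and, Finset.mem_singleton]
        constructor
        · rintro ⟨-, hf⟩
          funext s
          rw [Subsingleton.elim s (Fin.last 0)]
          exact hf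
        · rintro rfl
          exact ⟨fun a b hab => absurd hab (by omega), rfl⟩
      rw [hset, Finset.sum_singleton]
      simp [cseq, Fin.prod_univ_one, show u + 1 - u - 1 = 0 by omega]
    | succ m' =>
      simp only [cseq]
      rw [← Finset.sum_filter, Finset.sum_mul]
      have hlt : ∀ a ∈ (Finset.univ.filter
            (fun i : Fin (m'+1+1) → Fin (u+1) => StrictMono i)).filter
            (fun i => i (Fin.last (m'+1)) = Fin.last u),
          ∀ s : Fin (m'+1), (a s.castSucc : ℕ) < u := by
        intro a ha s
        simp only [Finset.mem_filter, Finset.mem_univ, true_and] at ha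
        have h1 : a s.castSucc < a (Fin.last (m'+1)) := ha.1 (Fin.castSucc_lt_last s)
        rw [ha.2] at h1
        simpa using Fin.lt_def.mp h1
      refine Finset.sum_bij' (fun a ha => fun s => (⟨(a s.castSucc : ℕ), hlt a ha s⟩ : Fin u))
        (fun b hb => Fin.snoc (Fin.castSucc ∘ b) (Fin.last u)) ?_ ?_ ?_ ?_ ?_
      · intro a ha
        simp only [Finset.mem_filter, Finset.mem_univ, true_and] at ha ⊢
        intro s s' hss
        exact ha.1 (Fin.strictMono_castSucc hss)
      · intro b hb
        simp only [Finset.mem_filter, Finset.mem_univ, true_and] at hb ⊢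
        exact ⟨strictMono_snoc hb, Fin.snoc_last _ _⟩
      · intro a ha
        simp only [Finset.mem_filter, Finset.mem_univ, true_and] at ha
        funext s
        beta_reduce
        refine Fin.lastCases ?_ (fun s' => ?_) s
        · rw [Fin.snoc_last]; exact ha.2.symm
        · rw [Fin.snoc_castSucc]; exact Fin.ext (by simp)
      · intro b hb
        funext s
        beta_reduce
        exact Fin.ext (by simp)
      · intro a ha
        simp only [Finset.mem_filter, Finset.mem_univ, true_and] at ha
        beta_reduce
        rw [Fin.prod_univ_castSucc]
        have hval : (a (Fin.last (m'+1)) : ℕ) = u := by rw [ha.2]; simp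
        simp only [Fin.val_mk, Fin.coe_castSucc, Fin.val_last, hval]
        rw [show u + 1 - (a 0 : ℕ) - (m'+1+1) = u - (a (Fin.castSucc 0) : ℕ) - (m'+1) by
          rw [show Fin.castSucc (0 : Fin (m'+1)) = (0 : Fin (m'+2)) from rfl]; omega]
        ring
end

section
/- Prefix recursion for the gap-weighted k-mer sum: define h_j[t] := Σ_{i ∈ I_{x_{1:t}, j}} λ^{gaps(i)} K_{Z_j}(x_i) ∈ R^q with gaps(i) = i_j - i₁ - j + 1, h_j[0] = 0. Then with c_j[t] as in the exponential-weight recursion: h_j[t] = h_j[t-1] + c_{j-1}[t-1] ⊙ b_j[t] for 1 ≤ j ≤ k. -/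
open scoped RealInnerProductSpace Classical

/-- `h_j[t] = Σ_{i ∈ I_{x_{1:t}, j}} λ^{gaps(i)} K_{Z_j}(x_i) ∈ ℝ^q` with
`gaps(i) = i_j - i₁ - j + 1` (indices written `0`-based), `h_0[t]` the all-ones vector. -/
noncomputable def hseq (d q : ℕ) (α lam : ℝ) (x : ℕ → EuclideanSpace ℝ (Fin d))
    (z : Fin q → ℕ → EuclideanSpace ℝ (Fin d)) : ℕ → ℕ → Fin q → ℝ
  | 0, _ => fun _ => 1
  | j + 1, t => fun l =>
      ∑ i : Fin (j + 1) → Fin t,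
        if StrictMono i then
          lam ^ ((i (Fin.last j) : ℕ) - (i 0 : ℕ) - j) *
            ∏ s : Fin (j + 1), Real.exp (α * (⟪x (i s : ℕ), z l (s : ℕ)⟫ - 1))
        else 0

/-- Prefix recursion for the gap-weighted `k`-mer sum:
`h_j[t] = h_j[t-1] + c_{j-1}[t-1] ⊙ b_j[t]` for `1 ≤ j ≤ k`, where `b_j[t]` has entries
`exp(α(⟨x_t, z_j^l⟩ - 1))`. -/
theorem hseq_recursion (d q k : ℕ) (α lam : ℝ) (hα : 0 < α)
    (hlam0 : 0 ≤ lam) (hlam1 : lam ≤ 1)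
    (x : ℕ → EuclideanSpace ℝ (Fin d)) (hx : ∀ n, ‖x n‖ = 1)
    (z : Fin q → ℕ → EuclideanSpace ℝ (Fin d)) (hz : ∀ l s, ‖z l s‖ = 1)
    (j t : ℕ) (hj : 1 ≤ j) (hjk : j ≤ k) (ht : 1 ≤ t) :
    hseq d q α lam x z j t = fun l =>
      hseq d q α lam x z j (t - 1) l
        + cseq d q α lam x z (j - 1) (t - 1) l
            * Real.exp (α * (⟪x (t - 1), z l (j - 1)⟫ - 1)) := by
  obtain ⟨m, rfl⟩ : ∃ m, j = m + 1 := ⟨j - 1, (Nat.succ_pred_eq_of_pos hj).symm⟩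
  obtain ⟨u, rfl⟩ : ∃ u, t = u + 1 := ⟨t - 1, (Nat.succ_pred_eq_of_pos ht).symm⟩
  funext l
  simp only [Nat.add_sub_cancel]
  have key : ∀ T : ℕ, hseq d q α lam x z (m+1) T l
      = ∑ i ∈ Finset.univ.filter (fun i : Fin (m+1) → Fin T => StrictMono i),
          lam ^ ((i (Fin.last m) : ℕ) - (i 0 : ℕ) - m) *
            ∏ s : Fin (m+1), Real.exp (α * (⟪x (i s : ℕ), z l (s : ℕ)⟫ - 1)) := by
    intro T
    simp only [hseq]
    rw [Finset.sum_filter]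
  rw [key (u+1), key u]
  rw [← Finset.sum_filter_add_sum_filter_not
    (Finset.univ.filter (fun i : Fin (m+1) → Fin (u+1) => StrictMono i))
    (fun i => (i (Fin.last m) : ℕ) < u)]
  congr 1
  · -- part A : tuples with last entry < u
    refine Finset.sum_bij'
      (i := fun (i : Fin (m+1) → Fin (u+1)) hi => fun s : Fin (m+1) =>
        (⟨(i s : ℕ), by
          simp only [Finset.mem_filter, Finset.mem_univ, true_and] at hi
          exact lt_of_le_of_lt (Fin.le_def.mp (hi.1.monotone (Fin.le_last s))) hi.2⟩ : Fin u))
      (j := fun g _ => fun s => (g s).castSucc) ?_ ?_ ?_ ?_ ?_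
    · intro a ha
      simp only [Finset.mem_filter, Finset.mem_univ, true_and] at ha ⊢
      intro s1 s2 h12
      exact Fin.lt_def.mpr (Fin.lt_def.mp (ha.1 h12))
    · intro g hg
      simp only [Finset.mem_filter, Finset.mem_univ, true_and] at hg ⊢
      constructor
      · exact fun s1 s2 h12 => Fin.strictMono_castSucc (hg h12)
      · exact (g (Fin.last m)).isLt
    · intro a ha
      funext s
      exact Fin.ext rfl
    · intro g hg
      funext s
      exact Fin.ext rfl
    · intro a ha
      rfl
  · -- part B : tuples with last entry = u
    have hBlast : ∀ i ∈ (Finset.univ.filter (fun i : Fin (m+1) → Fin (u+1) => StrictMono i)).filter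
        (fun i => ¬ (i (Fin.last m) : ℕ) < u), (i (Fin.last m) : ℕ) = u := by
      intro i hi
      have := (i (Fin.last m)).isLt
      simp only [Finset.mem_filter] at hi
      omega
    have step1 : ∑ i ∈ (Finset.univ.filter (fun i : Fin (m+1) → Fin (u+1) => StrictMono i)).filter
          (fun i => ¬ (i (Fin.last m) : ℕ) < u),
          lam ^ ((i (Fin.last m) : ℕ) - (i 0 : ℕ) - m) *
            ∏ s : Fin (m+1), Real.exp (α * (⟪x (i s : ℕ), z l (s : ℕ)⟫ - 1))
        = ∑ g ∈ Finset.univ.filter (fun g : Fin m → Fin u => StrictMono g),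
          (fun i : Fin (m+1) → Fin (u+1) =>
            lam ^ ((i (Fin.last m) : ℕ) - (i 0 : ℕ) - m) *
              ∏ s : Fin (m+1), Real.exp (α * (⟪x (i s : ℕ), z l (s : ℕ)⟫ - 1)))
          (Fin.snoc (fun s => (g s).castSucc) (Fin.last u)) := by
      refine Finset.sum_bij'
        (i := fun (i : Fin (m+1) → Fin (u+1)) hi => fun s : Fin m =>
          (⟨(i s.castSucc : ℕ), by
            simp only [Finset.mem_filter, Finset.mem_univ, true_and] at hi
            have h1 : i s.castSucc < i (Fin.last m) := hi.1 (Fin.castSucc_lt_last s)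
            have h2 := (i (Fin.last m)).isLt
            have h3 := Fin.lt_def.mp h1
            omega⟩ : Fin u))
        (j := fun g _ => Fin.snoc (fun s => (g s).castSucc) (Fin.last u)) ?_ ?_ ?_ ?_ ?_
      · intro a ha
        simp only [Finset.mem_filter, Finset.mem_univ, true_and] at ha ⊢
        intro s1 s2 h12
        exact Fin.lt_def.mpr (Fin.lt_def.mp (ha.1 (Fin.castSucc_lt_castSucc_iff.mpr h12)))
      · intro g hg
        simp only [Finset.mem_filter, Finset.mem_univ, true_and] at hg ⊢
        constructor
        · intro s1 s2 h12
          rcases Fin.eq_castSucc_or_eq_last s2 with ⟨s2', rfl⟩ | rfl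
          · rcases Fin.eq_castSucc_or_eq_last s1 with ⟨s1', rfl⟩ | rfl
            · rw [Fin.snoc_castSucc, Fin.snoc_castSucc]
              exact Fin.strictMono_castSucc (hg (Fin.castSucc_lt_castSucc_iff.mp h12))
            · exact absurd (h12.trans (Fin.castSucc_lt_last s2')) (lt_irrefl _)
          · rcases Fin.eq_castSucc_or_eq_last s1 with ⟨s1', rfl⟩ | rfl
            · rw [Fin.snoc_castSucc, Fin.snoc_last]
              exact Fin.castSucc_lt_last _
            · exact absurd h12 (lt_irrefl _)
        · simp [Fin.snoc_last]
      · intro a ha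
        have hlast := hBlast a ha
        funext s
        rcases Fin.eq_castSucc_or_eq_last s with ⟨s', rfl⟩ | rfl
        · simp only [Fin.snoc_castSucc]
          exact Fin.ext rfl
        · simp only [Fin.snoc_last]
          exact Fin.ext (by simpa using hlast.symm)
      · intro g hg
        funext s
        simp only [Fin.snoc_castSucc]
        exact Fin.ext rfl
      · intro a ha
        have hlv : (Fin.snoc (fun s : Fin m =>
            ((⟨(a s.castSucc : ℕ), by
              simp only [Finset.mem_filter, Finset.mem_univ, true_and] at ha
              have h1 : a s.castSucc < a (Fin.last m) := ha.1 (Fin.castSucc_lt_last s)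
              have h2 := (a (Fin.last m)).isLt
              have h3 := Fin.lt_def.mp h1
              omega⟩ : Fin u)).castSucc) (Fin.last u) : Fin (m+1) → Fin (u+1)) = a := by
          have hlast := hBlast a ha
          funext s
          rcases Fin.eq_castSucc_or_eq_last s with ⟨s', rfl⟩ | rfl
          · simp only [Fin.snoc_castSucc]
            exact Fin.ext rfl
          · simp only [Fin.snoc_last]
            exact Fin.ext (by simpa using hlast.symm)
        rw [hlv]
    rw [step1]
    clear hBlast step1
    cases m with
    | zero =>
      rw [Finset.filter_true_of_mem (fun g _ => Subsingleton.strictMono g)]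
      rw [Finset.univ_unique, Finset.sum_singleton]
      simp [cseq, Fin.snoc, Fin.last]
    | succ m' =>
      have hval : ∀ g : Fin (m'+1) → Fin u,
          (fun i : Fin (m'+1+1) → Fin (u+1) =>
            lam ^ ((i (Fin.last (m'+1)) : ℕ) - (i 0 : ℕ) - (m'+1)) *
              ∏ s : Fin (m'+1+1), Real.exp (α * (⟪x (i s : ℕ), z l (s : ℕ)⟫ - 1)))
            (Fin.snoc (fun s => (g s).castSucc) (Fin.last u))
          = (lam ^ (u - (g 0 : ℕ) - (m'+1)) *
              ∏ s : Fin (m'+1), Real.exp (α * (⟪x (g s : ℕ), z l (s : ℕ)⟫ - 1))) *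
            Real.exp (α * (⟪x u, z l (m'+1)⟫ - 1)) := by
        intro g
        have h0 : (Fin.snoc (fun s : Fin (m'+1) => (g s).castSucc) (Fin.last u)
            : Fin (m'+1+1) → Fin (u+1)) 0 = (g 0).castSucc := by
          rw [← Fin.castSucc_zero, Fin.snoc_castSucc]
        beta_reduce
        rw [Fin.snoc_last, h0, Fin.prod_univ_castSucc]
        simp only [Fin.snoc_castSucc, Fin.snoc_last, Fin.coe_castSucc, Fin.val_last]
        ring
      rw [Finset.sum_congr rfl (fun g _ => hval g), ← Finset.sum_mul]
      congr 1
      rw [Finset.sum_filter]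
      simp only [cseq]
end
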